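/- With the component-wise logarithmic quantizer 𝔮 in diagonalizing coordinates: for any ε > 0 there exists δ > 0 (quantizer parameter) such that ‖𝔮(x) - x‖_d ≤ ε‖x‖_d for all x ∈ ℝⁿ, where ‖·‖_d is the canonical homogeneous norm. -/

import Mathlib

open Matrix NormedSpace

noncomputable def dil {n : ℕ} (G : Matrix (Fin n) (Fin n) ℝ) (s : ℝ) :
    Matrix (Fin n) (Fin n) ℝ :=
  NormedSpace.exp (s • G)

noncomputable def wnorm {n : ℕ} (P : Matrix (Fin n) (Fin n) ℝ) (x : Fin n → ℝ) : ℝ :=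
  Real.sqrt (x ⬝ᵥ P.mulVec x)

/-! In the coordinates `ξ = Γ⁻¹ x` the dilation acts diagonally, `d(s) = Γ diag(e^{s λᵢ}) Γ⁻¹`,
so the componentwise bound `|q(ξᵢ) - ξᵢ| ≤ δ |ξᵢ|` survives every dilation:
`‖d(s)(𝔮(x) - x)‖ ≤ δ K ‖d(s) x‖` with `K` depending only on `P` and `Γ` (equivalence of norms).
At `s = -ln (ε ‖x‖_d) = -ln ε - ln ‖x‖_d` the right-hand side is at most `δ K C_ε`, where `C_ε`
bounds `d(-ln ε)` in the `P`-norm, hence `< 1` for small `δ`. As `s ↦ ‖d(s) y‖` is nondecreasing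
(the derivative of its square is a quadratic form in `PG_d + G_dᵀP`), this forces
`‖𝔮(x) - x‖_d < ε ‖x‖_d`. -/

section Homogeneous

variable {E : Type*} [NormedAddCommGroup E] [NormedSpace ℝ E] {f : E → ℝ}

theorem eq_norm_mul_apply_inv_norm_smul (hsmul : ∀ (a : ℝ) (v : E), f (a • v) = |a| * f v)
    {v : E} (hv : v ≠ 0) : f v = ‖v‖ * f (‖v‖⁻¹ • v) := by
  rw [hsmul, abs_inv, abs_norm, mul_inv_cancel_left₀ (norm_ne_zero_iff.2 hv)]

theorem exists_le_mul_norm_of_continuous [FiniteDimensional ℝ E] (hf : Continuous f)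
    (hsmul : ∀ (a : ℝ) (v : E), f (a • v) = |a| * f v) :
    ∃ C, 0 ≤ C ∧ ∀ v, f v ≤ C * ‖v‖ := by
  have hf0 : f 0 = 0 := by simpa using hsmul 0 0
  obtain ⟨u, -, hu⟩ := (isCompact_closedBall (0 : E) 1).exists_isMaxOn
    (Metric.nonempty_closedBall.2 zero_le_one) hf.continuousOn
  refine ⟨f u, hf0 ▸ hu (Metric.mem_closedBall_self zero_le_one), fun v => ?_⟩
  rcases eq_or_ne v 0 with rfl | hv
  · simp [hf0]
  rw [eq_norm_mul_apply_inv_norm_smul hsmul hv, mul_comm]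
  gcongr
  exact hu (by simp [norm_smul, hv])

theorem exists_mul_norm_le_of_continuous [FiniteDimensional ℝ E] (hf : Continuous f)
    (hsmul : ∀ (a : ℝ) (v : E), f (a • v) = |a| * f v) (hpos : ∀ v, v ≠ 0 → 0 < f v) :
    ∃ c, 0 < c ∧ ∀ v, c * ‖v‖ ≤ f v := by
  have hf0 : f 0 = 0 := by simpa using hsmul 0 0
  rcases subsingleton_or_nontrivial E with hE | hE
  · exact ⟨1, one_pos, fun v => by simp [Subsingleton.elim v 0, hf0]⟩
  obtain ⟨u, hu, hmin⟩ := (isCompact_sphere (0 : E) 1).exists_isMinOn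
    (NormedSpace.sphere_nonempty.2 zero_le_one) hf.continuousOn
  refine ⟨f u, hpos u (ne_zero_of_mem_unit_sphere ⟨u, hu⟩), fun v => ?_⟩
  rcases eq_or_ne v 0 with rfl | hv
  · simp [hf0]
  rw [eq_norm_mul_apply_inv_norm_smul hsmul hv, mul_comm]
  gcongr
  exact hmin (by simp [norm_smul, hv])

end Homogeneous

section WeightedNorm

variable {n : ℕ} {P : Matrix (Fin n) (Fin n) ℝ}

theorem continuous_wnorm (P : Matrix (Fin n) (Fin n) ℝ) : Continuous (wnorm P) :=
  (continuous_id.dotProduct (continuous_const.matrix_mulVec continuous_id)).sqrt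

theorem wnorm_smul (P : Matrix (Fin n) (Fin n) ℝ) (a : ℝ) (v : Fin n → ℝ) :
    wnorm P (a • v) = |a| * wnorm P v := by
  rw [wnorm, wnorm, mulVec_smul, dotProduct_smul, smul_dotProduct, smul_eq_mul, smul_eq_mul,
    ← mul_assoc, Real.sqrt_mul (mul_self_nonneg a), Real.sqrt_mul_self_eq_abs]

theorem Matrix.PosDef.wnorm_pos (hP : P.PosDef) {v : Fin n → ℝ} (hv : v ≠ 0) :
    0 < wnorm P v :=
  Real.sqrt_pos.2 (by simpa using hP.dotProduct_mulVec_pos hv)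

theorem exists_wnorm_mulVec_le_mul_norm (P A : Matrix (Fin n) (Fin n) ℝ) :
    ∃ C, 0 ≤ C ∧ ∀ v, wnorm P (A *ᵥ v) ≤ C * ‖v‖ :=
  exists_le_mul_norm_of_continuous
    ((continuous_wnorm P).comp (continuous_const.matrix_mulVec continuous_id))
    fun a v => by simp only [mulVec_smul, wnorm_smul]

theorem Matrix.PosDef.exists_mul_norm_le_wnorm_mulVec (hP : P.PosDef)
    {Γ : Matrix (Fin n) (Fin n) ℝ} (hΓ : IsUnit Γ.det) :
    ∃ c, 0 < c ∧ ∀ v, c * ‖v‖ ≤ wnorm P (Γ *ᵥ v) :=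
  exists_mul_norm_le_of_continuous
    ((continuous_wnorm P).comp (continuous_const.matrix_mulVec continuous_id))
    (fun a v => by simp only [mulVec_smul, wnorm_smul])
    fun v hv => hP.wnorm_pos fun h => hv (eq_zero_of_mulVec_eq_zero hΓ.ne_zero h)

theorem Matrix.PosDef.exists_wnorm_mulVec_le (hP : P.PosDef) (A : Matrix (Fin n) (Fin n) ℝ) :
    ∃ C, 0 ≤ C ∧ ∀ v, wnorm P (A *ᵥ v) ≤ C * wnorm P v := by
  obtain ⟨C, hC0, hC⟩ := exists_wnorm_mulVec_le_mul_norm P A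
  obtain ⟨c, hc0, hc⟩ := hP.exists_mul_norm_le_wnorm_mulVec (Γ := 1) (by simp)
  refine ⟨C / c, by positivity, fun v => ?_⟩
  calc wnorm P (A *ᵥ v) ≤ C * ‖v‖ := hC v
    _ ≤ C * (wnorm P v / c) := by
        gcongr
        rw [le_div_iff₀ hc0, mul_comm]
        simpa using hc v
    _ = C / c * wnorm P v := by ring

theorem Matrix.PosDef.exists_wnorm_mulVec_le_of_norm_le (hP : P.PosDef)
    {Γ : Matrix (Fin n) (Fin n) ℝ} (hΓ : IsUnit Γ.det) :
    ∃ K, 0 ≤ K ∧ ∀ (δ : ℝ) (u v : Fin n → ℝ), 0 ≤ δ → ‖u‖ ≤ δ * ‖v‖ →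
      wnorm P (Γ *ᵥ u) ≤ δ * K * wnorm P (Γ *ᵥ v) := by
  obtain ⟨C, hC0, hC⟩ := exists_wnorm_mulVec_le_mul_norm P Γ
  obtain ⟨c, hc0, hc⟩ := hP.exists_mul_norm_le_wnorm_mulVec hΓ
  refine ⟨C / c, by positivity, fun δ u v hδ huv => ?_⟩
  calc wnorm P (Γ *ᵥ u) ≤ C * ‖u‖ := hC u
    _ ≤ C * (δ * ‖v‖) := by gcongr
    _ ≤ C * (δ * (wnorm P (Γ *ᵥ v) / c)) := by
        gcongr
        rw [le_div_iff₀ hc0, mul_comm]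
        exact hc v
    _ = δ * (C / c) * wnorm P (Γ *ᵥ v) := by ring

end WeightedNorm

theorem HasDerivAt.dotProduct {ι : Type*} [Fintype ι] {f g : ℝ → ι → ℝ} {f' g' : ι → ℝ} {t : ℝ}
    (hf : HasDerivAt f f' t) (hg : HasDerivAt g g' t) :
    HasDerivAt (fun s => f s ⬝ᵥ g s) (f' ⬝ᵥ g t + f t ⬝ᵥ g') t := by
  simp only [_root_.dotProduct, ← Finset.sum_add_distrib]
  exact HasDerivAt.fun_sum fun i _ => (hasDerivAt_pi.1 hf i).mul (hasDerivAt_pi.1 hg i)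

theorem HasDerivAt.mulVec {ι κ : Type*} [Fintype ι] [Fintype κ] (A : Matrix κ ι ℝ) {f : ℝ → ι → ℝ}
    {f' : ι → ℝ} {t : ℝ} (hf : HasDerivAt f f' t) :
    HasDerivAt (fun s => A *ᵥ f s) (A *ᵥ f') t :=
  A.mulVecLin.toContinuousLinearMap.hasFDerivAt.comp_hasDerivAt t hf

section Dilation

variable {n : ℕ}

theorem dil_add (G : Matrix (Fin n) (Fin n) ℝ) (a b : ℝ) : dil G (a + b) = dil G a * dil G b := by
  rw [dil, dil, dil, add_smul]
  exact Matrix.exp_add_of_commute _ _ ((Commute.refl G).smul_left a |>.smul_right b)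

theorem dil_conj {Γ : Matrix (Fin n) (Fin n) ℝ} (hΓ : IsUnit Γ.det) (A : Matrix (Fin n) (Fin n) ℝ)
    (s : ℝ) : dil (Γ * A * Γ⁻¹) s = Γ * dil A s * Γ⁻¹ := by
  rw [dil, dil, ← Matrix.exp_conj _ _ ((Matrix.isUnit_iff_isUnit_det Γ).2 hΓ), mul_smul_comm,
    smul_mul_assoc]

theorem dil_diagonal (d : Fin n → ℝ) (s : ℝ) :
    dil (diagonal d) s = diagonal fun i => Real.exp (s * d i) := by
  rw [dil, ← diagonal_smul, Matrix.exp_diagonal]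
  congr 1
  ext i
  simp [Real.exp_eq_exp_ℝ]

theorem hasDerivAt_dil_mulVec (G : Matrix (Fin n) (Fin n) ℝ) (y : Fin n → ℝ) (s : ℝ) :
    HasDerivAt (fun t => dil G t *ᵥ y) (G *ᵥ (dil G s *ᵥ y)) s := by
  -- Any Banach-algebra norm on matrices will do: the claim only involves the product topology.
  let := Matrix.linftyOpNormedRing (n := Fin n) (α := ℝ)
  let := Matrix.linftyOpNormedAlgebra (n := Fin n) (R := ℝ) (α := ℝ)
  rw [dil, mulVec_mulVec]
  exact (((mulVecBilin ℝ ℝ).flip y).toContinuousLinearMap.hasFDerivAt).comp_hasDerivAt s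
    (hasDerivAt_exp_smul_const' G s)

theorem monotone_wnorm_dil {P G : Matrix (Fin n) (Fin n) ℝ} (hPG : (P * G + Gᵀ * P).PosSemidef)
    (y : Fin n → ℝ) : Monotone fun s => wnorm P (dil G s *ᵥ y) := by
  have hderiv : ∀ s, HasDerivAt (fun t => (dil G t *ᵥ y) ⬝ᵥ P *ᵥ (dil G t *ᵥ y))
      ((dil G s *ᵥ y) ⬝ᵥ (P * G + Gᵀ * P) *ᵥ (dil G s *ᵥ y)) s := by
    intro s
    convert (hasDerivAt_dil_mulVec G y s).dotProduct
      ((hasDerivAt_dil_mulVec G y s).mulVec P) using 1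
    rw [add_mulVec, dotProduct_add, ← mulVec_mulVec, ← mulVec_mulVec, dotProduct_mulVec _ Gᵀ,
      vecMul_transpose, add_comm]
  have hquad : Monotone fun t => (dil G t *ᵥ y) ⬝ᵥ P *ᵥ (dil G t *ᵥ y) :=
    monotone_of_deriv_nonneg (fun s => (hderiv s).differentiableAt)
      fun s => (hderiv s).deriv ▸ by simpa using hPG.dotProduct_mulVec_nonneg (dil G s *ᵥ y)
  exact fun a b hab => Real.sqrt_le_sqrt (hquad hab)

end Dilation

section Quantizer

variable {n : ℕ}

noncomputable def quantize (Γ : Matrix (Fin n) (Fin n) ℝ) (q : ℝ → ℝ) (x : Fin n → ℝ) : Fin n → ℝ :=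
  Γ *ᵥ fun i => q ((Γ⁻¹ *ᵥ x) i)

theorem quantize_sub_self {Γ : Matrix (Fin n) (Fin n) ℝ} (hΓ : IsUnit Γ.det) (q : ℝ → ℝ)
    (x : Fin n → ℝ) :
    quantize Γ q x - x = Γ *ᵥ ((fun i => q ((Γ⁻¹ *ᵥ x) i)) - Γ⁻¹ *ᵥ x) := by
  rw [quantize, mulVec_sub, mulVec_mulVec, mul_nonsing_inv Γ hΓ, one_mulVec]

theorem norm_diagonal_mulVec_le {ι : Type*} [Fintype ι] [DecidableEq ι] (d : ι → ℝ)
    {δ : ℝ} (hδ : 0 ≤ δ) {e ξ : ι → ℝ} (h : ∀ i, |e i| ≤ δ * |ξ i|) :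
    ‖diagonal d *ᵥ e‖ ≤ δ * ‖diagonal d *ᵥ ξ‖ := by
  refine (pi_norm_le_iff_of_nonneg (by positivity)).2 fun i => ?_
  calc ‖(diagonal d *ᵥ e) i‖ = |d i| * |e i| := by simp [mulVec_diagonal]
    _ ≤ |d i| * (δ * |ξ i|) := by gcongr; exact h i
    _ = δ * ‖(diagonal d *ᵥ ξ) i‖ := by simp [mulVec_diagonal]; ring
    _ ≤ δ * ‖diagonal d *ᵥ ξ‖ := by gcongr; exact norm_le_pi_norm _ i

theorem Matrix.PosDef.exists_wnorm_dil_quantize_sub_le {P Γ Λ : Matrix (Fin n) (Fin n) ℝ}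
    (hP : P.PosDef) (hΓ : IsUnit Γ.det) (hΛ : Λ.IsDiag) :
    ∃ K, 0 ≤ K ∧ ∀ δ, 0 ≤ δ → ∀ q : ℝ → ℝ, (∀ φ, |q φ - φ| ≤ δ * |φ|) → ∀ x s,
      wnorm P (dil (Γ * Λ * Γ⁻¹) s *ᵥ (quantize Γ q x - x))
        ≤ δ * K * wnorm P (dil (Γ * Λ * Γ⁻¹) s *ᵥ x) := by
  obtain ⟨K, hK0, hK⟩ := hP.exists_wnorm_mulVec_le_of_norm_le hΓ
  refine ⟨K, hK0, fun δ hδ q hq x s => ?_⟩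
  set D := diagonal fun i => Real.exp (s * Λ i i)
  have hdil : dil (Γ * Λ * Γ⁻¹) s = Γ * D * Γ⁻¹ := by
    rw [dil_conj hΓ, ← hΛ.diagonal_diag, dil_diagonal]
    rfl
  have hΓΓ : Γ⁻¹ * Γ = 1 := nonsing_inv_mul Γ hΓ
  rw [hdil, quantize_sub_self hΓ, mulVec_mulVec, mul_assoc, hΓΓ, mul_one, ← mulVec_mulVec,
    ← mulVec_mulVec, ← mulVec_mulVec]
  exact hK δ _ _ hδ (norm_diagonal_mulVec_le _ hδ fun i => hq _)

end Quantizer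

theorem lt_of_wnorm_dil_lt_one {n : ℕ} {P G : Matrix (Fin n) (Fin n) ℝ}
    (hPG : (P * G + Gᵀ * P).PosSemidef) {hnd : (Fin n → ℝ) → ℝ} (hnd0 : hnd 0 = 0)
    (hnddef : ∀ x, x ≠ 0 → wnorm P (dil G (-Real.log (hnd x)) *ᵥ x) = 1)
    {y : Fin n → ℝ} {r : ℝ} (hr : 0 < r) (hy : wnorm P (dil G (-Real.log r) *ᵥ y) < 1) :
    hnd y < r := by
  rcases eq_or_ne y 0 with rfl | hy0
  · rwa [hnd0]
  by_contra! hry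
  have hlog : -Real.log (hnd y) ≤ -Real.log r := neg_le_neg (Real.log_le_log hr hry)
  linarith [monotone_wnorm_dil hPG y hlog, hnddef y hy0]

theorem stmt14_general {n : ℕ} (P Gd Γ Λ : Matrix (Fin n) (Fin n) ℝ) (hP : P.PosDef)
    (hmon : (P * Gd + Gdᵀ * P).PosDef)
    (hΓ : IsUnit Γ.det) (hfac : Gd = Γ * Λ * Γ⁻¹)
    (hΛdiag : ∀ i j : Fin n, i ≠ j → Λ i j = 0)
    (hnd : (Fin n → ℝ) → ℝ) (hnd0 : hnd 0 = 0)
    (hndpos : ∀ x : Fin n → ℝ, x ≠ 0 → 0 < hnd x)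
    (hnddef : ∀ x : Fin n → ℝ, x ≠ 0 → wnorm P (dil Gd (-(Real.log (hnd x))) *ᵥ x) = 1) :
    ∀ ε : ℝ, 0 < ε → ∃ δ : ℝ, 0 < δ ∧ ∀ q : ℝ → ℝ,
      (∀ φ : ℝ, |q φ - φ| ≤ δ * |φ|) →
      ∀ x : Fin n → ℝ,
        hnd (Γ *ᵥ (fun i => q ((Γ⁻¹ *ᵥ x) i)) - x) ≤ ε * hnd x := by
  subst hfac
  intro ε hε
  obtain ⟨K, hK0, hK⟩ := hP.exists_wnorm_dil_quantize_sub_le hΓ hΛdiag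
  obtain ⟨C, hC0, hC⟩ := hP.exists_wnorm_mulVec_le (dil (Γ * Λ * Γ⁻¹) (-Real.log ε))
  refine ⟨1 / (K * C + 1), by positivity, fun q hq x => ?_⟩
  change hnd (quantize Γ q x - x) ≤ ε * hnd x
  rcases eq_or_ne x 0 with rfl | hx
  · have hq0 : q 0 = 0 := by simpa using hq 0
    simp [quantize, hq0, hnd0, ← Pi.zero_def]
  have hx0 := hndpos x hx
  refine (lt_of_wnorm_dil_lt_one hmon.posSemidef hnd0 hnddef (by positivity) ?_).le
  rw [Real.log_mul hε.ne' hx0.ne', neg_add, dil_add, ← mulVec_mulVec]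
  calc _ ≤ C * wnorm P (dil (Γ * Λ * Γ⁻¹) (-Real.log (hnd x)) *ᵥ (quantize Γ q x - x)) := hC _
    _ ≤ C * (1 / (K * C + 1) * K * wnorm P (dil (Γ * Λ * Γ⁻¹) (-Real.log (hnd x)) *ᵥ x)) := by
        gcongr
        exact hK _ (by positivity) q hq x _
    _ = K * C / (K * C + 1) := by rw [hnddef x hx]; ring
    _ < 1 := (div_lt_one (by positivity)).2 (lt_add_one _)

/-- Corollary 2: for the component-wise logarithmic quantizer in
diagonalizing coordinates, for any `ε > 0` there is a quantizer parameter `δ > 0` such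
that `‖𝔮(x) - x‖_d ≤ ε‖x‖_d` for all `x`. -/
theorem stmt14 {n : ℕ} (P Gd Γ Λ : Matrix (Fin n) (Fin n) ℝ) (hP : P.PosDef)
    (hmon : (P * Gd + Gdᵀ * P).PosDef)
    (hΓ : IsUnit Γ.det) (hfac : Gd = Γ * Λ * Γ⁻¹)
    (hΛdiag : ∀ i j : Fin n, i ≠ j → Λ i j = 0) (hΛpos : ∀ i : Fin n, 0 < Λ i i)
    (hnd : (Fin n → ℝ) → ℝ) (hnd0 : hnd 0 = 0)
    (hndpos : ∀ x : Fin n → ℝ, x ≠ 0 → 0 < hnd x)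
    (hnddef : ∀ x : Fin n → ℝ, x ≠ 0 → wnorm P (dil Gd (-(Real.log (hnd x))) *ᵥ x) = 1) :
    ∀ ε : ℝ, 0 < ε → ∃ δ : ℝ, 0 < δ ∧ ∀ q : ℝ → ℝ,
      (∀ φ : ℝ, |q φ - φ| ≤ δ * |φ|) →
      ∀ x : Fin n → ℝ,
        hnd (Γ *ᵥ (fun i => q ((Γ⁻¹ *ᵥ x) i)) - x) ≤ ε * hnd x :=
  stmt14_general P Gd Γ Λ hP hmon hΓ hfac hΛdiag hnd hnd0 hndpos hnddef
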